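/- arXiv:2202.00603 — 2 statements merged into one kernel-verified Lean document; each statement's English description precedes it below -/
import Mathlib

section
/- Let 0 < α < 1, B(α) > 0, t₀ ∈ ℝ, and let u : [t₀, ∞) → ℝ be continuously differentiable. Then for every t ≥ t₀, the Caputo–Fabrizio fractional derivative satisfies ᶜᶠD^α_{t₀}(u²)(t) ≤ 2 u(t) · ᶜᶠD^α_{t₀}u(t). -/
/-!
Write `E(x) = exp (-(α/(1-α)) (t - x))` for the kernel, which is positive and increasing in `x`.
Since `(u²)' = ((u - u t)²)' + 2 u(t) u'`, the claim amounts to `ᶜᶠD^α((u - u t)²)(t) ≤ 0`.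
This holds for every `C¹` function `φ` attaining its minimum over `[t₀, t]` at `t`: integrating
by parts against `ψ = φ - φ t`, which vanishes at `t` and is nonnegative,
`∫ φ' E = -ψ(t₀) E(t₀) - ∫ ψ E' ≤ 0`.
-/

/-- The Caputo–Fabrizio fractional derivative of order `α` with base point `t₀`
and normalization constant `B`:
`ᶜᶠD^α_{t₀}f(t) = (B(2−α)/(2(1−α))) ∫_{t₀}^{t} f'(x) exp(−(α/(1−α))(t−x)) dx`. -/
noncomputable def cfDeriv (B α t₀ : ℝ) (f : ℝ → ℝ) (t : ℝ) : ℝ :=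
  (B * (2 - α) / (2 * (1 - α))) * ∫ x in t₀..t,
    deriv f x * Real.exp (-(α / (1 - α)) * (t - x))

open MeasureTheory Set intervalIntegral

theorem integral_deriv_mul_nonpos_of_isMinOn {φ φ' E E' : ℝ → ℝ} {a b : ℝ} (hab : a ≤ b)
    (hφ : ContinuousOn φ (Icc a b)) (hφd : ∀ x ∈ Ioo a b, HasDerivAt φ (φ' x) x)
    (hφ'i : IntervalIntegrable φ' volume a b) (hE : ContinuousOn E (Icc a b))
    (hEd : ∀ x ∈ Ioo a b, HasDerivAt E (E' x) x) (hE'i : IntervalIntegrable E' volume a b)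
    (hmin : IsMinOn φ (Icc a b) b) (hE0 : ∀ x ∈ Icc a b, 0 ≤ E x)
    (hE'0 : ∀ x ∈ Icc a b, 0 ≤ E' x) :
    ∫ x in a..b, φ' x * E x ≤ 0 := by
  set ψ : ℝ → ℝ := fun x => φ x - φ b
  have hψ0 : ∀ x ∈ Icc a b, 0 ≤ ψ x := fun x hx => sub_nonneg.2 (hmin hx)
  have hparts : ∫ x in a..b, E x * φ' x = E b * ψ b - E a * ψ a - ∫ x in a..b, E' x * ψ x := by
    rw [← uIcc_of_le hab] at hφ hE
    refine integral_mul_deriv_eq_deriv_mul_of_hasDerivAt hE (hφ.sub continuousOn_const) ?_ ?_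
      hE'i hφ'i <;> rw [min_eq_left hab, max_eq_right hab]
    exacts [hEd, fun x hx => (hφd x hx).sub_const (φ b)]
  have hψE' : 0 ≤ ∫ x in a..b, E' x * ψ x :=
    integral_nonneg hab fun x hx => mul_nonneg (hE'0 x hx) (hψ0 x hx)
  have hψa : 0 ≤ E a * ψ a :=
    mul_nonneg (hE0 a (left_mem_Icc.2 hab)) (hψ0 a (left_mem_Icc.2 hab))
  simp_rw [mul_comm (φ' _)]
  rw [hparts]
  simp only [ψ, sub_self, mul_zero]
  linarith

theorem hasDerivAt_exp_neg_mul_sub (c t x : ℝ) :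
    HasDerivAt (fun y => Real.exp (-c * (t - y))) (c * Real.exp (-c * (t - x))) x := by
  convert (((hasDerivAt_id' x).const_sub t).const_mul (-c)).exp using 1
  ring

theorem hasDerivAt_sub_const_sq {u : ℝ → ℝ} {v x : ℝ} (hu : HasDerivAt u v x) (c : ℝ) :
    HasDerivAt (fun y => (u y - c) ^ 2) (2 * (u x - c) * v) x := by
  simpa using (hu.sub_const c).fun_pow 2

section CaputoFabrizio

variable {B α t₀ t : ℝ} {φ φ' : ℝ → ℝ}

theorem cfDeriv_eq_of_hasDerivAt (ht : t₀ ≤ t) (hφ : ∀ x ∈ Ioo t₀ t, HasDerivAt φ (φ' x) x) :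
    cfDeriv B α t₀ φ t = (B * (2 - α) / (2 * (1 - α))) * ∫ x in t₀..t,
      φ' x * Real.exp (-(α / (1 - α)) * (t - x)) := by
  unfold cfDeriv
  congr 1
  refine integral_congr_ae ?_
  filter_upwards [volume.ae_ne t] with x hxt hx
  rw [uIoc_of_le ht] at hx
  rw [(hφ x ⟨hx.1, lt_of_le_of_ne hx.2 hxt⟩).deriv]

theorem cfDeriv_sq_eq_cfDeriv_sub_const_sq_add {u v : ℝ → ℝ} (ht : t₀ ≤ t)
    (hu : ContinuousOn u (Icc t₀ t)) (hv : ContinuousOn v (Icc t₀ t))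
    (hud : ∀ x ∈ Ioo t₀ t, HasDerivAt u (v x) x) (c : ℝ) :
    cfDeriv B α t₀ (fun x => u x ^ 2) t =
      cfDeriv B α t₀ (fun x => (u x - c) ^ 2) t + 2 * c * cfDeriv B α t₀ u t := by
  have hsq : ∀ x ∈ Ioo t₀ t, HasDerivAt (fun y => u y ^ 2) (2 * u x * v x) x := fun x hx => by
    simpa using (hud x hx).fun_pow 2
  rw [cfDeriv_eq_of_hasDerivAt ht hsq,
    cfDeriv_eq_of_hasDerivAt ht fun x hx => hasDerivAt_sub_const_sq (hud x hx) c,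
    cfDeriv_eq_of_hasDerivAt ht hud, mul_left_comm (2 * c), ← mul_add]
  congr 1
  rw [← intervalIntegral.integral_const_mul, ← intervalIntegral.integral_add]
  · exact integral_congr fun x _ => by ring
  all_goals exact ContinuousOn.intervalIntegrable_of_Icc ht (by fun_prop)

/-- The extremum principle for the Caputo–Fabrizio derivative. -/
theorem cfDeriv_nonpos_of_isMinOn (hB : 0 ≤ B) (hα : 0 ≤ α) (hα1 : α < 1) (ht : t₀ ≤ t)
    (hφ : ContinuousOn φ (Icc t₀ t)) (hφd : ∀ x ∈ Ioo t₀ t, HasDerivAt φ (φ' x) x)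
    (hφ'i : IntervalIntegrable φ' volume t₀ t) (hmin : IsMinOn φ (Icc t₀ t) t) :
    cfDeriv B α t₀ φ t ≤ 0 := by
  have hL : 0 ≤ α / (1 - α) := div_nonneg hα (by linarith)
  have hE : Continuous fun x => Real.exp (-(α / (1 - α)) * (t - x)) := by fun_prop
  rw [cfDeriv_eq_of_hasDerivAt ht hφd]
  refine mul_nonpos_of_nonneg_of_nonpos (div_nonneg (mul_nonneg hB (by linarith)) (by linarith))
    (integral_deriv_mul_nonpos_of_isMinOn ht hφ hφd hφ'i hE.continuousOn
      (fun x _ => hasDerivAt_exp_neg_mul_sub _ t x) ((by fun_prop : Continuous fun x =>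
        α / (1 - α) * Real.exp (-(α / (1 - α)) * (t - x))).intervalIntegrable _ _)
      hmin (fun x _ => (Real.exp_pos _).le) (fun x _ => mul_nonneg hL (Real.exp_pos _).le))

end CaputoFabrizio

/-- For `0 < α < 1`, `B(α) > 0` and a continuously differentiable function `u` on `[t₀,∞)`,
the Caputo–Fabrizio fractional derivative satisfies
`ᶜᶠD^α_{t₀}(u²)(t) ≤ 2u(t) ᶜᶠD^α_{t₀}u(t)` for all `t ≥ t₀`. -/
theorem cf_sq_estimate (α B t₀ : ℝ) (hα : 0 < α) (hα1 : α < 1) (hB : 0 < B)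
    (u : ℝ → ℝ) (hu : ContDiffOn ℝ 1 u (Set.Ici t₀)) :
    ∀ t : ℝ, t₀ ≤ t →
      cfDeriv B α t₀ (fun x => u x ^ 2) t ≤ 2 * u t * cfDeriv B α t₀ u t := by
  intro t ht
  set v := derivWithin u (Ici t₀)
  have hvc : ContinuousOn v (Icc t₀ t) :=
    (hu.continuousOn_derivWithin (uniqueDiffOn_Ici t₀) le_rfl).mono Icc_subset_Ici_self
  have huc : ContinuousOn u (Icc t₀ t) := hu.continuousOn.mono Icc_subset_Ici_self
  have hud : ∀ x ∈ Ioo t₀ t, HasDerivAt u (v x) x := fun x hx =>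
    ((hu.differentiableOn one_ne_zero x (mem_Ici.2 hx.1.le)).hasDerivWithinAt).hasDerivAt
      (Ici_mem_nhds hx.1)
  have hkey : cfDeriv B α t₀ (fun y => (u y - u t) ^ 2) t ≤ 0 :=
    cfDeriv_nonpos_of_isMinOn hB.le hα.le hα1 ht ((huc.sub continuousOn_const).pow 2)
      (fun x hx => hasDerivAt_sub_const_sq (hud x hx) (u t))
      (ContinuousOn.intervalIntegrable_of_Icc ht (by fun_prop))
      fun x _ => by simp [sq_nonneg]
  rw [cfDeriv_sq_eq_cfDeriv_sub_const_sq_add ht huc hvc hud (u t)]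
  linarith
end

section
/- Let 0 < α < 1 and let Λ, d, σ, γ, β be positive parameters; set m₁ = σ^α + d^α, m₂ = γ^α + d^α, S₀ = Λ^α/d^α. Let F(S,I) = I·F₁(S,I) satisfy hypotheses (H) with F₁ continuous on (0,∞)×[0,∞), F₁(S,0) > 0 for S > 0, and set R₀ = (σ^α/(m₁m₂))·F₁(S₀,0). Let S, E, I : [0,∞) → (0,∞) be continuously differentiable and satisfy, for all t > 0, the Caputo fractional system ᶜD^α₀S(t) = Λ^α − d^α S(t) − F(S(t),I(t)), ᶜD^α₀E(t) = F(S(t),I(t)) − m₁E(t), ᶜD^α₀I(t) = σ^α E(t) − m₂ I(t). Define V₀(t) = ∫_{S₀}^{S(t)} (F₁(x,0) − F₁(S₀,0))/F₁(x,0) dx + E(t) + (m₁/σ^α) I(t). Then for all t > 0, ᶜD^α₀V₀(t) ≤ (1 − F₁(S₀,0)/F₁(S(t),0))·d^α(S₀ − S(t)) + (m₁m₂/σ^α)(R₀ − 1)·I(t). -/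
/-!
Since `F₁(·, 0)` is increasing, so is the integrand `1 - F₁(S₀, 0) / F₁(x, 0)` of `V₀`, and its
primitive `g` is convex. For convex `g` one has `ᶜDᵅ(g ∘ S)(t) ≤ g'(S t) · ᶜDᵅS(t)`: the gap
`φ(x) = g(S x) - g(S t) - g'(S t) (S x - S t)` between `g ∘ S` and its tangent line is nonnegative
and vanishes at `t`, so integrating `φ'(x) (t - x)^(-α)` by parts over `[0, b]` bounds it by
`φ(b) (t - b)^(-α)`, which tends to `0` as `b → t⁻` because `φ(b) = O(t - b)` and `α < 1`.
Substituting the three equations, the estimate then reduces to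
`F₁(S₀, 0) / F₁(S, 0) · I · (F₁(S, I) - F₁(S, 0)) ≤ 0`, as `F₁` is nonincreasing in `I`.
-/

/-- The Caputo fractional derivative of order `α` with base point `t₀`:
`ᶜD^α_{t₀}f(t) = (1/Γ(1−α)) ∫_{t₀}^{t} f'(x) (t−x)^{−α} dx`. -/
noncomputable def caputoDeriv (α t₀ : ℝ) (f : ℝ → ℝ) (t : ℝ) : ℝ :=
  (1 / Real.Gamma (1 - α)) * ∫ x in t₀..t, deriv f x * (t - x) ^ (-α)

open MeasureTheory intervalIntegral Set Filter Topology

section Kernel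

variable {α : ℝ}

theorem intervalIntegrable_sub_rpow_neg (hα1 : α < 1) (t a b : ℝ) :
    IntervalIntegrable (fun x => (t - x) ^ (-α)) volume a b := by
  simpa using (intervalIntegrable_rpow' (a := t - a) (b := t - b) (by linarith)).comp_sub_left t

theorem ContDiffOn.intervalIntegrable_deriv_mul_sub_rpow_neg {f : ℝ → ℝ} {t₀ t : ℝ}
    (hf : ContDiffOn ℝ 1 f (Ici t₀)) (hα1 : α < 1) (ht : t₀ ≤ t) :
    IntervalIntegrable (fun x => deriv f x * (t - x) ^ (-α)) volume t₀ t := by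
  have hf' : ContinuousOn (derivWithin f (Ici t₀)) (uIcc t₀ t) := by
    rw [uIcc_of_le ht]
    exact (hf.continuousOn_derivWithin (uniqueDiffOn_Ici t₀) le_rfl).mono Icc_subset_Ici_self
  refine (intervalIntegrable_congr fun x hx => ?_).1
    ((intervalIntegrable_sub_rpow_neg hα1 t t₀ t).continuousOn_mul hf')
  rw [uIoc_of_le ht] at hx
  simp only [derivWithin_of_mem_nhds (Ici_mem_nhds hx.1)]

theorem hasDerivAt_sub_rpow_neg {t x : ℝ} (hx : x < t) :
    HasDerivAt (fun y => (t - y) ^ (-α)) (α * (t - x) ^ (-α - 1)) x := by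
  have h : HasDerivAt (fun y => t - y) (-1) x := by simpa using (hasDerivAt_id x).const_sub t
  convert h.rpow_const (p := -α) (Or.inl (sub_ne_zero.2 hx.ne')) using 1
  ring

theorem integral_deriv_mul_sub_rpow_neg_le {φ φ' : ℝ → ℝ} {a b t : ℝ} (hα : 0 ≤ α)
    (hab : a ≤ b) (hbt : b < t) (hφc : ContinuousOn φ (Icc a b))
    (hφd : ∀ x ∈ Ioo a b, HasDerivAt φ (φ' x) x) (hφ0 : ∀ x ∈ Icc a b, 0 ≤ φ x)
    (hint : IntervalIntegrable (fun x => φ' x * (t - x) ^ (-α)) volume a b) :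
    ∫ x in a..b, φ' x * (t - x) ^ (-α) ≤ φ b * (t - b) ^ (-α) := by
  have hne : ∀ x ∈ Icc a b, t - x ≠ 0 := fun x hx => sub_ne_zero.2 (by linarith [hx.2])
  have hk : ContinuousOn (fun x => (t - x) ^ (-α)) (Icc a b) :=
    (continuousOn_const.sub continuousOn_id).rpow_const fun x hx => Or.inl (hne x hx)
  have hk' : ContinuousOn (fun x => α * (t - x) ^ (-α - 1)) (Icc a b) :=
    continuousOn_const.mul <|
      (continuousOn_const.sub continuousOn_id).rpow_const fun x hx => Or.inl (hne x hx)
  have hφk' : IntervalIntegrable (fun x => φ x * (α * (t - x) ^ (-α - 1))) volume a b :=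
    (hφc.mul hk').intervalIntegrable_of_Icc hab
  have hparts := integral_eq_sub_of_hasDerivAt_of_le hab (hφc.mul hk)
    (fun x hx => (hφd x hx).mul (hasDerivAt_sub_rpow_neg (hx.2.trans hbt))) (hint.add hφk')
  rw [integral_add hint hφk'] at hparts
  simp only [Pi.mul_apply] at hparts
  have hφk'_nonneg : 0 ≤ ∫ x in a..b, φ x * (α * (t - x) ^ (-α - 1)) :=
    integral_nonneg hab fun x hx =>
      mul_nonneg (hφ0 x hx) (mul_nonneg hα (Real.rpow_nonneg (by linarith [hx.2]) _))
  have hφa : 0 ≤ φ a * (t - a) ^ (-α) :=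
    mul_nonneg (hφ0 a (left_mem_Icc.2 hab)) (Real.rpow_nonneg (by linarith) _)
  linarith

theorem tendsto_mul_sub_rpow_neg_nhdsLT {φ : ℝ → ℝ} {c t : ℝ} (hα1 : α < 1)
    (hφ : HasDerivWithinAt φ c (Iio t) t) (hφt : φ t = 0) :
    Tendsto (fun b => φ b * (t - b) ^ (-α)) (𝓝[<] t) (𝓝 0) := by
  have hslope : Tendsto (slope φ t) (𝓝[<] t) (𝓝 c) :=
    (hasDerivWithinAt_iff_tendsto_slope' (by simp)).1 hφ
  have hpow : Tendsto (fun b => (t - b) ^ (1 - α)) (𝓝[<] t) (𝓝 0) := by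
    have h := ((continuousAt_const.sub continuousAt_id).rpow_const (p := 1 - α)
      (Or.inr (by linarith)) : ContinuousAt (fun b : ℝ => (t - b) ^ (1 - α)) t)
    simpa [Real.zero_rpow (by linarith : 1 - α ≠ 0)] using h.tendsto.mono_left nhdsWithin_le_nhds
  have h := (hslope.mul hpow).neg
  rw [mul_zero, neg_zero] at h
  refine h.congr' (eventually_nhdsWithin_of_forall fun b (hb : b < t) => ?_)
  have hpos : 0 < t - b := sub_pos.2 hb
  have hne : b - t ≠ 0 := sub_ne_zero.2 hb.ne
  dsimp only
  rw [slope_def_field, hφt, Real.rpow_sub hpos, Real.rpow_one, Real.rpow_neg hpos.le]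
  field_simp
  ring

theorem integral_deriv_mul_sub_rpow_neg_nonpos {φ φ' : ℝ → ℝ} {a c t : ℝ} (hα : 0 ≤ α)
    (hα1 : α < 1) (hat : a < t) (hφc : ContinuousOn φ (Icc a t))
    (hφd : ∀ x ∈ Ioo a t, HasDerivAt φ (φ' x) x) (hφt : HasDerivWithinAt φ c (Iio t) t)
    (hφ0 : ∀ x ∈ Icc a t, 0 ≤ φ x) (hφt0 : φ t = 0)
    (hint : IntervalIntegrable (fun x => φ' x * (t - x) ^ (-α)) volume a t) :
    ∫ x in a..t, φ' x * (t - x) ^ (-α) ≤ 0 := by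
  have htrunc : ∀ᶠ b in 𝓝[<] t,
      ∫ x in a..b, φ' x * (t - x) ^ (-α) ≤ φ b * (t - b) ^ (-α) := by
    filter_upwards [Ico_mem_nhdsLT hat] with b hb
    have hbt : Icc a b ⊆ Icc a t := Icc_subset_Icc_right hb.2.le
    refine integral_deriv_mul_sub_rpow_neg_le hα hb.1 hb.2 (hφc.mono hbt)
      (fun x hx => hφd x ⟨hx.1, hx.2.trans hb.2⟩) (fun x hx => hφ0 x (hbt hx))
      (hint.mono_set ?_)
    rwa [uIcc_of_le hb.1, uIcc_of_le hat.le]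
  have hprim : Tendsto (fun b => ∫ x in a..b, φ' x * (t - x) ^ (-α)) (𝓝[<] t)
      (𝓝 (∫ x in a..t, φ' x * (t - x) ^ (-α))) := by
    have h := continuousOn_primitive_interval' hint left_mem_uIcc t right_mem_uIcc
    rw [uIcc_of_le hat.le] at h
    exact h.tendsto.mono_left (nhdsWithin_le_of_mem (Icc_mem_nhdsLT hat))
  exact le_of_tendsto_of_tendsto hprim (tendsto_mul_sub_rpow_neg_nhdsLT hα1 hφt hφt0) htrunc

end Kernel

theorem ConvexOn.add_mul_sub_le_of_hasDerivAt {U : Set ℝ} {f : ℝ → ℝ} {x y f' : ℝ}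
    (hf : ConvexOn ℝ U f) (hx : x ∈ U) (hy : y ∈ U) (hf' : HasDerivAt f f' x) :
    f x + f' * (y - x) ≤ f y := by
  rcases lt_trichotomy x y with hxy | rfl | hxy
  · have h := hf.le_slope_of_hasDerivAt hx hy hxy hf'
    rw [slope_def_field, le_div_iff₀ (sub_pos.2 hxy)] at h
    linarith
  · simp
  · have h := hf.slope_le_of_hasDerivAt hy hx hxy hf'
    rw [slope_def_field, div_le_iff₀ (sub_pos.2 hxy)] at h
    linarith

section FundamentalTheorem

variable {U : Set ℝ} {q : ℝ → ℝ} {c : ℝ}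

theorem hasDerivAt_integral_of_continuousOn (hU : IsOpen U) (hUc : U.OrdConnected)
    (hq : ContinuousOn q U) (hc : c ∈ U) {s : ℝ} (hs : s ∈ U) :
    HasDerivAt (fun s => ∫ x in c..s, q x) (q s) s :=
  integral_hasDerivAt_right (hq.mono (hUc.uIcc_subset hc hs)).intervalIntegrable
    (hq.stronglyMeasurableAtFilter hU s hs) (hq.continuousAt (hU.mem_nhds hs))

theorem contDiffOn_integral_of_continuousOn (hU : IsOpen U) (hUc : U.OrdConnected)
    (hq : ContinuousOn q U) (hc : c ∈ U) :
    ContDiffOn ℝ 1 (fun s => ∫ x in c..s, q x) U := by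
  have hd := fun s hs => hasDerivAt_integral_of_continuousOn hU hUc hq hc (s := s) hs
  rw [show (1 : WithTop ℕ∞) = 0 + 1 from rfl, contDiffOn_succ_iff_deriv_of_isOpen hU]
  refine ⟨fun s hs => (hd s hs).differentiableAt.differentiableWithinAt, by simp, ?_⟩
  exact contDiffOn_zero.2 (hq.congr fun s hs => (hd s hs).deriv)

theorem convexOn_integral_of_monotoneOn (hU : IsOpen U) (hUc : U.OrdConnected)
    (hq : ContinuousOn q U) (hqm : MonotoneOn q U) (hc : c ∈ U) :
    ConvexOn ℝ U (fun s => ∫ x in c..s, q x) := by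
  have hd := fun s hs => hasDerivAt_integral_of_continuousOn hU hUc hq hc (s := s) hs
  refine MonotoneOn.convexOn_of_deriv hUc.convex
    (fun s hs => (hd s hs).continuousAt.continuousWithinAt) ?_ ?_ <;> rw [hU.interior_eq]
  · exact fun s hs => (hd s hs).differentiableAt.differentiableWithinAt
  · exact hqm.congr fun s hs => (hd s hs).deriv.symm

end FundamentalTheorem

section Caputo

variable {α t₀ t : ℝ}

theorem caputoDeriv_const_mul (c : ℝ) (f : ℝ → ℝ) :
    caputoDeriv α t₀ (fun τ => c * f τ) t = c * caputoDeriv α t₀ f t := by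
  simp only [caputoDeriv, deriv_const_mul_field', mul_assoc, intervalIntegral.integral_const_mul]
  ring

theorem caputoDeriv_add {f g : ℝ → ℝ} (hα1 : α < 1) (ht : t₀ ≤ t)
    (hf : ContDiffOn ℝ 1 f (Ici t₀)) (hg : ContDiffOn ℝ 1 g (Ici t₀)) :
    caputoDeriv α t₀ (fun τ => f τ + g τ) t = caputoDeriv α t₀ f t + caputoDeriv α t₀ g t := by
  have hderiv : ∫ x in t₀..t, deriv (fun τ => f τ + g τ) x * (t - x) ^ (-α) =
      ∫ x in t₀..t, (deriv f x * (t - x) ^ (-α) + deriv g x * (t - x) ^ (-α)) := by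
    refine integral_congr_ae (Eventually.of_forall fun x hx => ?_)
    rw [uIoc_of_le ht] at hx
    have hx' : Ici t₀ ∈ 𝓝 x := Ici_mem_nhds hx.1
    rw [deriv_fun_add ((hf.differentiableOn one_ne_zero).differentiableAt hx')
      ((hg.differentiableOn one_ne_zero).differentiableAt hx'), add_mul]
  simp only [caputoDeriv]
  rw [hderiv, integral_add (hf.intervalIntegrable_deriv_mul_sub_rpow_neg hα1 ht)
    (hg.intervalIntegrable_deriv_mul_sub_rpow_neg hα1 ht), mul_add]

theorem integral_comp_mul_deriv_mul_sub_rpow_neg_le {U : Set ℝ} {g q S S' : ℝ → ℝ}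
    (hα : 0 ≤ α) (hα1 : α < 1) (ht : t₀ < t) (hg : ConvexOn ℝ U g)
    (hgq : ∀ s ∈ U, HasDerivAt g (q s) s) (hq : ContinuousOn q U)
    (hSc : ContinuousOn S (Icc t₀ t)) (hSd : ∀ x ∈ Ioc t₀ t, HasDerivAt S (S' x) x)
    (hSU : MapsTo S (Icc t₀ t) U)
    (hint : IntervalIntegrable (fun x => S' x * (t - x) ^ (-α)) volume t₀ t) :
    ∫ x in t₀..t, q (S x) * S' x * (t - x) ^ (-α) ≤
      q (S t) * ∫ x in t₀..t, S' x * (t - x) ^ (-α) := by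
  have htU : S t ∈ U := hSU (right_mem_Icc.2 ht.le)
  have hqS : ContinuousOn (fun x => q (S x) - q (S t)) (uIcc t₀ t) := by
    rw [uIcc_of_le ht.le]
    exact (hq.comp hSc hSU).sub continuousOn_const
  have hint' : IntervalIntegrable
      (fun x => (q (S x) - q (S t)) * S' x * (t - x) ^ (-α)) volume t₀ t := by
    simpa only [mul_assoc] using hint.continuousOn_mul hqS
  set φ : ℝ → ℝ := fun x => g (S x) - g (S t) - q (S t) * (S x - S t)
  have hφd : ∀ x ∈ Ioc t₀ t, HasDerivAt φ ((q (S x) - q (S t)) * S' x) x := fun x hx => by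
    refine ((((hgq _ (hSU (Ioc_subset_Icc_self hx))).comp x (hSd x hx)).sub_const
      (g (S t))).sub (((hSd x hx).sub_const (S t)).const_mul (q (S t)))).congr_deriv ?_
    ring
  have hgc : ContinuousOn g U := fun s hs => (hgq s hs).continuousAt.continuousWithinAt
  have hφc : ContinuousOn φ (Icc t₀ t) :=
    ((hgc.comp hSc hSU).sub continuousOn_const).sub
      (continuousOn_const.mul (hSc.sub continuousOn_const))
  have hφ0 : ∀ x ∈ Icc t₀ t, 0 ≤ φ x := fun x hx => by
    have htangent := hg.add_mul_sub_le_of_hasDerivAt htU (hSU hx) (hgq _ htU)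
    simp only [φ]
    linarith
  have hφ_int := integral_deriv_mul_sub_rpow_neg_nonpos hα hα1 ht hφc
    (fun x hx => hφd x (Ioo_subset_Ioc_self hx)) (hφd t ⟨ht, le_rfl⟩).hasDerivWithinAt hφ0
    (by simp [φ]) hint'
  have hsplit : ∫ x in t₀..t, q (S x) * S' x * (t - x) ^ (-α) =
      q (S t) * (∫ x in t₀..t, S' x * (t - x) ^ (-α)) +
        ∫ x in t₀..t, (q (S x) - q (S t)) * S' x * (t - x) ^ (-α) := by
    rw [← intervalIntegral.integral_const_mul, ← integral_add (hint.const_mul _) hint']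
    congr 1 with x
    ring
  linarith

theorem caputoDeriv_comp_le_of_convexOn {U : Set ℝ} {g S : ℝ → ℝ} (hα : 0 ≤ α) (hα1 : α < 1)
    (ht : t₀ < t) (hU : IsOpen U) (hg : ConvexOn ℝ U g) (hg' : ContDiffOn ℝ 1 g U)
    (hS : ContDiffOn ℝ 1 S (Ici t₀)) (hSU : MapsTo S (Ici t₀) U) :
    caputoDeriv α t₀ (fun τ => g (S τ)) t ≤ deriv g (S t) * caputoDeriv α t₀ S t := by
  have hgd : ∀ s ∈ U, HasDerivAt g (deriv g s) s := fun s hs =>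
    ((hg'.differentiableOn one_ne_zero).differentiableAt (hU.mem_nhds hs)).hasDerivAt
  have hSd : ∀ x ∈ Ioi t₀, HasDerivAt S (deriv S x) x := fun x hx =>
    ((hS.differentiableOn one_ne_zero).differentiableAt (Ici_mem_nhds hx)).hasDerivAt
  have hchain : ∫ x in t₀..t, deriv (fun τ => g (S τ)) x * (t - x) ^ (-α) =
      ∫ x in t₀..t, deriv g (S x) * deriv S x * (t - x) ^ (-α) := by
    refine integral_congr_ae (Eventually.of_forall fun x hx => ?_)
    rw [uIoc_of_le ht.le] at hx
    rw [← Function.comp_def, ((hgd _ (hSU (mem_Ici_of_Ioi hx.1))).comp x (hSd x hx.1)).deriv]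
  have hΓ : 0 ≤ 1 / Real.Gamma (1 - α) := (one_div_pos.2 (Real.Gamma_pos_of_pos (by linarith))).le
  simp only [caputoDeriv]
  rw [hchain, mul_left_comm]
  exact mul_le_mul_of_nonneg_left (integral_comp_mul_deriv_mul_sub_rpow_neg_le hα hα1 ht hg hgd
    (hg'.continuousOn_deriv_of_isOpen hU le_rfl) (hS.continuousOn.mono Icc_subset_Ici_self)
    (fun x hx => hSd x hx.1) (hSU.mono_left Icc_subset_Ici_self)
    (hS.intervalIntegrable_deriv_mul_sub_rpow_neg hα1 ht.le)) hΓ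

end Caputo

theorem MonotoneOn.sub_div_self {U : Set ℝ} {f : ℝ → ℝ} {c : ℝ} (hf : MonotoneOn f U)
    (hpos : ∀ x ∈ U, 0 < f x) (hc : 0 ≤ c) : MonotoneOn (fun x => (f x - c) / f x) U := by
  intro x hx y hy hxy
  simp only [sub_div, div_self (hpos x hx).ne', div_self (hpos y hy).ne']
  have hx0 := hpos x hx
  gcongr
  exact hf hx hy hxy

theorem apply_le_apply_zero_of_deriv_nonpos {F : ℝ → ℝ → ℝ} {s i : ℝ}
    (hF : ContinuousOn (fun p : ℝ × ℝ => F p.1 p.2) (Ioi 0 ×ˢ Ici 0))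
    (hFd : DifferentiableOn ℝ (fun p : ℝ × ℝ => F p.1 p.2) (Ioi 0 ×ˢ Ioi 0))
    (hFi : ∀ i > 0, deriv (fun i => F s i) i ≤ 0) (hs : 0 < s) (hi : 0 ≤ i) :
    F s i ≤ F s 0 := by
  have hsec : Continuous fun i : ℝ => (s, i) := by fun_prop
  refine antitoneOn_of_deriv_nonpos (convex_Ici 0)
    (hF.comp hsec.continuousOn fun i hi => ⟨hs, hi⟩) ?_ ?_ self_mem_Ici hi hi <;>
    rw [interior_Ici]
  · exact hFd.comp (by fun_prop : Differentiable ℝ fun i : ℝ => (s, i)).differentiableOn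
      fun i hi => ⟨hs, hi⟩
  · exact hFi

section Volterra

variable {f : ℝ → ℝ} {c : ℝ}

/-- For `f = id` this is the Volterra function `s - c - c log (s / c)`. -/
noncomputable def volterraIntegral (f : ℝ → ℝ) (c s : ℝ) : ℝ :=
  ∫ x in c..s, (f x - f c) / f x

theorem contDiffOn_volterraIntegral (hf : ContinuousOn f (Ioi 0))
    (hpos : ∀ x ∈ Ioi 0, 0 < f x) (hc : 0 < c) :
    ContDiffOn ℝ 1 (volterraIntegral f c) (Ioi 0) :=
  contDiffOn_integral_of_continuousOn isOpen_Ioi ordConnected_Ioi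
    ((hf.sub continuousOn_const).div hf fun x hx => (hpos x hx).ne') hc

theorem caputoDeriv_volterraIntegral_comp_le {S : ℝ → ℝ} {α t₀ t : ℝ} (hα : 0 ≤ α)
    (hα1 : α < 1) (ht : t₀ < t) (hf : ContinuousOn f (Ioi 0)) (hfm : MonotoneOn f (Ioi 0))
    (hpos : ∀ x ∈ Ioi 0, 0 < f x) (hc : 0 < c) (hS : ContDiffOn ℝ 1 S (Ici t₀))
    (hSpos : MapsTo S (Ici t₀) (Ioi 0)) :
    caputoDeriv α t₀ (fun τ => volterraIntegral f c (S τ)) t ≤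
      (1 - f c / f (S t)) * caputoDeriv α t₀ S t := by
  have hq : ContinuousOn (fun x => (f x - f c) / f x) (Ioi 0) :=
    (hf.sub continuousOn_const).div hf fun x hx => (hpos x hx).ne'
  have hSt : S t ∈ Ioi 0 := hSpos ht.le
  have hderiv : deriv (volterraIntegral f c) (S t) = 1 - f c / f (S t) := by
    have h : HasDerivAt (volterraIntegral f c) ((f (S t) - f c) / f (S t)) (S t) :=
      hasDerivAt_integral_of_continuousOn isOpen_Ioi ordConnected_Ioi hq hc hSt
    rw [h.deriv, sub_div, div_self (hpos _ hSt).ne']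
  rw [← hderiv]
  exact caputoDeriv_comp_le_of_convexOn hα hα1 ht isOpen_Ioi
    (convexOn_integral_of_monotoneOn isOpen_Ioi ordConnected_Ioi hq
      (hfm.sub_div_self hpos (hpos c hc).le) hc)
    (contDiffOn_volterraIntegral hf hpos hc) hS hSpos

end Volterra

theorem seir_lyapunov_combination_le {α Λ d σ m₁ m₂ S₀ R₀ a b s e i F : ℝ}
    (hσ : σ ^ α ≠ 0) (hm₁ : m₁ ≠ 0) (hm₂ : m₂ ≠ 0) (hΛ : Λ ^ α = d ^ α * S₀)
    (hR₀ : R₀ = σ ^ α / (m₁ * m₂) * a) (ha : 0 ≤ a) (hb : 0 < b) (hi : 0 ≤ i) (hF : F ≤ b) :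
    (1 - a / b) * (Λ ^ α - d ^ α * s - i * F) + (i * F - m₁ * e) +
        m₁ / σ ^ α * (σ ^ α * e - m₂ * i) ≤
      (1 - a / b) * (d ^ α * (S₀ - s)) + m₁ * m₂ / σ ^ α * (R₀ - 1) * i := by
  have hgap : 0 ≤ a / b * i * (b - F) :=
    mul_nonneg (mul_nonneg (div_nonneg ha hb.le) hi) (sub_nonneg.2 hF)
  have hid : (1 - a / b) * (Λ ^ α - d ^ α * s - i * F) + (i * F - m₁ * e) +
        m₁ / σ ^ α * (σ ^ α * e - m₂ * i) =
      (1 - a / b) * (d ^ α * (S₀ - s)) + m₁ * m₂ / σ ^ α * (R₀ - 1) * i -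
        a / b * i * (b - F) := by
    rw [hR₀, hΛ]
    field_simp
    ring
  linarith

theorem seir_dfe_lyapunov_estimate_general
    (α Λ d σ γ : ℝ) (hα : 0 < α) (hα1 : α < 1)
    (hΛ : 0 < Λ) (hd : 0 < d) (hσ : 0 < σ) (hγ : 0 < γ)
    (m₁ m₂ S₀ : ℝ)
    (hm₁ : m₁ = σ ^ α + d ^ α) (hm₂ : m₂ = γ ^ α + d ^ α) (hS₀ : S₀ = Λ ^ α / d ^ α)
    (F₁ : ℝ → ℝ → ℝ)
    (hF₁_cont : ContinuousOn (fun p : ℝ × ℝ => F₁ p.1 p.2) (Set.Ioi 0 ×ˢ Set.Ici 0))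
    (hF₁_diff : ContDiffOn ℝ 1 (fun p : ℝ × ℝ => F₁ p.1 p.2) (Set.Ioi 0 ×ˢ Set.Ioi 0))
    (hF₁_zero_pos : ∀ S > (0 : ℝ), 0 < F₁ S 0)
    (hF₁_S : ∀ S > (0 : ℝ), ∀ I ≥ (0 : ℝ), 0 < deriv (fun s => F₁ s I) S)
    (hF₁_I : ∀ S > (0 : ℝ), ∀ I ≥ (0 : ℝ), deriv (fun i => F₁ S i) I ≤ 0)
    (R₀ : ℝ) (hR₀ : R₀ = σ ^ α / (m₁ * m₂) * F₁ S₀ 0)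
    (S E I : ℝ → ℝ)
    (hS_pos : ∀ t ∈ Set.Ici (0 : ℝ), 0 < S t)
    (hI_pos : ∀ t ∈ Set.Ici (0 : ℝ), 0 < I t)
    (hS_smooth : ContDiffOn ℝ 1 S (Set.Ici 0))
    (hE_smooth : ContDiffOn ℝ 1 E (Set.Ici 0))
    (hI_smooth : ContDiffOn ℝ 1 I (Set.Ici 0))
    (heqS : ∀ t > (0 : ℝ),
      caputoDeriv α 0 S t = Λ ^ α - d ^ α * S t - I t * F₁ (S t) (I t))
    (heqE : ∀ t > (0 : ℝ),
      caputoDeriv α 0 E t = I t * F₁ (S t) (I t) - m₁ * E t)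
    (heqI : ∀ t > (0 : ℝ),
      caputoDeriv α 0 I t = σ ^ α * E t - m₂ * I t)
    (V₀ : ℝ → ℝ)
    (hV₀ : ∀ t, V₀ t =
      (∫ x in S₀..S t, (F₁ x 0 - F₁ S₀ 0) / F₁ x 0) + E t + (m₁ / σ ^ α) * I t) :
    ∀ t > (0 : ℝ),
      caputoDeriv α 0 V₀ t ≤
        (1 - F₁ S₀ 0 / F₁ (S t) 0) * (d ^ α * (S₀ - S t)) +
          m₁ * m₂ / σ ^ α * (R₀ - 1) * I t := by
  intro t ht
  have hS₀_pos : 0 < S₀ := hS₀ ▸ div_pos (Real.rpow_pos_of_pos hΛ α) (Real.rpow_pos_of_pos hd α)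
  have hSt : 0 < S t := hS_pos t ht.le
  have hf : ContinuousOn (fun s => F₁ s 0) (Ioi 0) :=
    hF₁_cont.comp (by fun_prop : Continuous fun s : ℝ => (s, (0 : ℝ))).continuousOn
      fun s hs => ⟨hs, self_mem_Ici⟩
  have hf_mono : MonotoneOn (fun s => F₁ s 0) (Ioi 0) :=
    (strictMonoOn_of_deriv_pos (convex_Ioi 0) hf fun s hs =>
      hF₁_S s (by simpa using hs) 0 le_rfl).monotoneOn
  have hW : ContDiffOn ℝ 1 (fun τ => volterraIntegral (fun s => F₁ s 0) S₀ (S τ)) (Ici 0) :=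
    (contDiffOn_volterraIntegral hf hF₁_zero_pos hS₀_pos).comp hS_smooth hS_pos
  have hV : caputoDeriv α 0 V₀ t ≤ (1 - F₁ S₀ 0 / F₁ (S t) 0) * caputoDeriv α 0 S t +
      caputoDeriv α 0 E t + m₁ / σ ^ α * caputoDeriv α 0 I t := by
    rw [show V₀ = fun τ => volterraIntegral (fun s => F₁ s 0) S₀ (S τ) + E τ + m₁ / σ ^ α * I τ
        from funext hV₀,
      caputoDeriv_add hα1 ht.le (hW.add hE_smooth) (contDiffOn_const.mul hI_smooth),
      caputoDeriv_add hα1 ht.le hW hE_smooth, caputoDeriv_const_mul]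
    gcongr
    exact caputoDeriv_volterraIntegral_comp_le hα.le hα1 ht hf hf_mono hF₁_zero_pos hS₀_pos
      hS_smooth hS_pos
  rw [heqS t ht, heqE t ht, heqI t ht] at hV
  have hdα := Real.rpow_pos_of_pos hd α
  have hσα := Real.rpow_pos_of_pos hσ α
  refine hV.trans (seir_lyapunov_combination_le hσα.ne' (by rw [hm₁]; positivity)
    (by rw [hm₂]; have := Real.rpow_pos_of_pos hγ α; positivity) (by rw [hS₀]; field_simp) hR₀
    (hF₁_zero_pos S₀ hS₀_pos).le (hF₁_zero_pos _ hSt) (hI_pos t ht.le).le ?_)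
  exact apply_le_apply_zero_of_deriv_nonpos hF₁_cont (hF₁_diff.differentiableOn one_ne_zero)
    (fun i hi => hF₁_I _ hSt i hi.le) hSt (hI_pos t ht.le).le

/-- For the Caputo fractional SEIR system with general incidence `F(S,I) = I·F₁(S,I)`
satisfying hypotheses (H), the Lyapunov functional
`V₀(t) = ∫_{S₀}^{S(t)} (F₁(x,0) − F₁(S₀,0))/F₁(x,0) dx + E(t) + (m₁/σ^α) I(t)`
satisfies, for all `t > 0`,
`ᶜD^α₀V₀(t) ≤ (1 − F₁(S₀,0)/F₁(S(t),0)) d^α (S₀ − S(t)) + (m₁m₂/σ^α)(R₀ − 1) I(t)`. -/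
theorem seir_dfe_lyapunov_estimate
    (α Λ d σ γ β : ℝ) (hα : 0 < α) (hα1 : α < 1)
    (hΛ : 0 < Λ) (hd : 0 < d) (hσ : 0 < σ) (hγ : 0 < γ) (hβ : 0 < β)
    (m₁ m₂ S₀ : ℝ)
    (hm₁ : m₁ = σ ^ α + d ^ α) (hm₂ : m₂ = γ ^ α + d ^ α) (hS₀ : S₀ = Λ ^ α / d ^ α)
    (F₁ : ℝ → ℝ → ℝ)
    (hF₁_cont : ContinuousOn (fun p : ℝ × ℝ => F₁ p.1 p.2) (Set.Ioi 0 ×ˢ Set.Ici 0))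
    (hF₁_diff : ContDiffOn ℝ 1 (fun p : ℝ × ℝ => F₁ p.1 p.2) (Set.Ioi 0 ×ˢ Set.Ioi 0))
    (hF₁_zero_pos : ∀ S > (0 : ℝ), 0 < F₁ S 0)
    (hF₁_pos : ∀ S > (0 : ℝ), ∀ I > (0 : ℝ), 0 < F₁ S I)
    (hF₁_S : ∀ S > (0 : ℝ), ∀ I ≥ (0 : ℝ), 0 < deriv (fun s => F₁ s I) S)
    (hF₁_I : ∀ S > (0 : ℝ), ∀ I ≥ (0 : ℝ), deriv (fun i => F₁ S i) I ≤ 0)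
    (hF_I : ∀ S > (0 : ℝ), ∀ I ≥ (0 : ℝ), 0 ≤ deriv (fun i => i * F₁ S i) I)
    (R₀ : ℝ) (hR₀ : R₀ = σ ^ α / (m₁ * m₂) * F₁ S₀ 0)
    (S E I : ℝ → ℝ)
    (hS_pos : ∀ t ∈ Set.Ici (0 : ℝ), 0 < S t)
    (hE_pos : ∀ t ∈ Set.Ici (0 : ℝ), 0 < E t)
    (hI_pos : ∀ t ∈ Set.Ici (0 : ℝ), 0 < I t)
    (hS_smooth : ContDiffOn ℝ 1 S (Set.Ici 0))
    (hE_smooth : ContDiffOn ℝ 1 E (Set.Ici 0))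
    (hI_smooth : ContDiffOn ℝ 1 I (Set.Ici 0))
    (heqS : ∀ t > (0 : ℝ),
      caputoDeriv α 0 S t = Λ ^ α - d ^ α * S t - I t * F₁ (S t) (I t))
    (heqE : ∀ t > (0 : ℝ),
      caputoDeriv α 0 E t = I t * F₁ (S t) (I t) - m₁ * E t)
    (heqI : ∀ t > (0 : ℝ),
      caputoDeriv α 0 I t = σ ^ α * E t - m₂ * I t)
    (V₀ : ℝ → ℝ)
    (hV₀ : ∀ t, V₀ t =
      (∫ x in S₀..S t, (F₁ x 0 - F₁ S₀ 0) / F₁ x 0) + E t + (m₁ / σ ^ α) * I t) :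
    ∀ t > (0 : ℝ),
      caputoDeriv α 0 V₀ t ≤
        (1 - F₁ S₀ 0 / F₁ (S t) 0) * (d ^ α * (S₀ - S t)) +
          m₁ * m₂ / σ ^ α * (R₀ - 1) * I t :=
  seir_dfe_lyapunov_estimate_general α Λ d σ γ hα hα1 hΛ hd hσ hγ m₁ m₂ S₀ hm₁ hm₂ hS₀ F₁ hF₁_cont
    hF₁_diff hF₁_zero_pos hF₁_S hF₁_I R₀ hR₀ S E I hS_pos hI_pos hS_smooth hE_smooth hI_smooth heqS
    heqE heqI V₀ hV₀
end
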